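/- Let M be a matroid on E. For the containment of the diagonal matroid Δ_M in M ⊕ M, the intermediate matroids M_i (for 0 ≤ i ≤ r, r = rank of M) given by rank_{M_i}(A ⊔ B) = min{rank_M(A ∪ B) + i, rank_M(A) + rank_M(B)} are matroids with M_0 = Δ_M, M_r = M ⊕ M, and every flat of M_i is a flat of M_{i+1}. -/

import Mathlib

/-- A matroid given by its rank function on subsets of a finite ground set. -/
structure MatroidRank (α : Type) [DecidableEq α] [Fintype α] where
  r : Finset α → ℕ
  r_empty : r ∅ = 0
  r_le_insert : ∀ A x, r A ≤ r (insert x A)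
  insert_le : ∀ A x, r (insert x A) ≤ r A + 1
  r_local : ∀ A x y, r (insert x A) = r A → r (insert y A) = r A →
    r (insert x (insert y A)) = r A

variable {α : Type} [DecidableEq α] [Fintype α]

/-- `F` is a flat (closed set) of the matroid `M`. -/
def MatroidRank.IsFlat (M : MatroidRank α) (F : Finset α) : Prop :=
  ∀ x ∉ F, M.r F < M.r (insert x F)

/-- Closure of a set in the matroid `M`. -/
def MatroidRank.cl (M : MatroidRank α) (A : Finset α) : Finset α :=
  Finset.univ.filter (fun x => M.r (insert x A) = M.r A)

/-- The matroid `M` has no loops. -/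
def MatroidRank.Loopfree (M : MatroidRank α) : Prop :=
  ∀ x : α, M.r {x} = 1

/-- the part of a subset of a disjoint union lying in the first factor. -/
def leftPart {β : Type} [DecidableEq β] [Fintype β] (S : Finset (α ⊕ β)) : Finset α :=
  Finset.univ.filter (fun a => Sum.inl a ∈ S)

/-- the part of a subset of a disjoint union lying in the second factor. -/
def rightPart {β : Type} [DecidableEq β] [Fintype β] (S : Finset (α ⊕ β)) : Finset β :=
  Finset.univ.filter (fun b => Sum.inr b ∈ S)

/-
The diagonal matroid Δ_M is a quotient of M ⊕ M: if adding `x` to `A ⊔ B` does not raise the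
rank in M ⊕ M, then `x` already lies in the M-closure of `A` or of `B`, hence in that of `A ∪ B`.
For any quotient `N` of a matroid `M`, `S ↦ min (r_N S + i) (r_M S)` is again a rank function:
an element that does not raise the minimum cannot raise whichever term is active at `S`, so
locality is inherited from `N` or from `M`. Since `N`-increments never exceed `M`-increments, an
element that strictly raises the minimum at level `i` raises `r_M`, and then also the minimum at
level `i + 1`.
-/

section

variable {β : Type} [DecidableEq β] [Fintype β]

@[simp]
lemma leftPart_insert_inl (a : α) (S : Finset (α ⊕ β)) :
    leftPart (insert (Sum.inl a) S) = insert a (leftPart S) := by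
  ext; simp [leftPart]

@[simp]
lemma rightPart_insert_inl {γ : Type} [DecidableEq γ] (a : γ) (S : Finset (γ ⊕ β)) :
    rightPart (insert (Sum.inl a) S) = rightPart S := by
  ext; simp [rightPart]

@[simp]
lemma leftPart_insert_inr (b : β) (S : Finset (α ⊕ β)) :
    leftPart (insert (Sum.inr b) S) = leftPart S := by
  ext; simp [leftPart]

@[simp]
lemma rightPart_insert_inr {γ : Type} [DecidableEq γ] (b : β) (S : Finset (γ ⊕ β)) :
    rightPart (insert (Sum.inr b) S) = insert b (rightPart S) := by
  ext; simp [rightPart]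

lemma leftPart_union_rightPart (S : Finset (α ⊕ α)) :
    leftPart S ∪ rightPart S = S.image (Sum.elim id id) := by
  ext a; simp [leftPart, rightPart]

namespace MatroidRank

section Rank

variable (M : MatroidRank α)

lemma r_insert_insert_eq_of_r_insert_eq {A : Finset α} {a : α}
    (h : M.r (insert a A) = M.r A) (y : α) :
    M.r (insert a (insert y A)) = M.r (insert y A) := by
  rcases (M.r_le_insert A y).eq_or_lt with hy | hy
  · rw [M.r_local A a y h hy.symm, ← hy]
  · have h₁ := M.insert_le A y
    have h₂ := M.insert_le (insert a A) y
    have h₃ := M.r_le_insert (insert y A) a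
    rw [Finset.insert_comm] at h₂
    omega

lemma r_insert_union_eq_of_r_insert_eq {A : Finset α} {a : α}
    (h : M.r (insert a A) = M.r A) (B : Finset α) :
    M.r (insert a (A ∪ B)) = M.r (A ∪ B) := by
  induction B using Finset.induction_on with
  | empty => simpa using h
  | insert b B _ ih =>
    rw [Finset.union_insert]
    exact M.r_insert_insert_eq_of_r_insert_eq ih b

lemma r_insert_eq_of_subset {A B : Finset α} {a : α} (hAB : A ⊆ B)
    (h : M.r (insert a A) = M.r A) : M.r (insert a B) = M.r B := by
  simpa only [Finset.union_eq_right.2 hAB] using M.r_insert_union_eq_of_r_insert_eq h B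

lemma r_le_r_union (A B : Finset α) : M.r A ≤ M.r (A ∪ B) := by
  induction B using Finset.induction_on with
  | empty => simp
  | insert b B _ ih =>
    rw [Finset.union_insert]
    exact ih.trans (M.r_le_insert _ b)

lemma r_mono {A B : Finset α} (hAB : A ⊆ B) : M.r A ≤ M.r B := by
  simpa only [Finset.union_eq_right.2 hAB] using M.r_le_r_union A B

lemma mem_cl {A : Finset α} {x : α} : x ∈ M.cl A ↔ M.r (insert x A) = M.r A := by
  simp [cl]

end Rank

def comap (M : MatroidRank α) (f : β → α) : MatroidRank β where
  r S := M.r (S.image f)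
  r_empty := by simpa using M.r_empty
  r_le_insert S x := by simpa only [Finset.image_insert] using M.r_le_insert _ (f x)
  insert_le S x := by simpa only [Finset.image_insert] using M.insert_le _ (f x)
  r_local S x y hx hy := by
    simp only [Finset.image_insert] at hx hy ⊢
    exact M.r_local _ _ _ hx hy

def sum (M : MatroidRank α) (N : MatroidRank β) : MatroidRank (α ⊕ β) where
  r S := M.r (leftPart S) + N.r (rightPart S)
  r_empty := by simp [leftPart, rightPart, M.r_empty, N.r_empty]
  r_le_insert S x := by
    rcases x with a | b
    · simpa using M.r_le_insert _ a
    · simpa using N.r_le_insert _ b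
  insert_le S x := by
    rcases x with a | b
    · simpa [add_right_comm] using M.insert_le _ a
    · simpa [add_assoc] using N.insert_le _ b
  r_local S x y hx hy := by
    rcases x with a | b <;> rcases y with c | d <;> simp only [leftPart_insert_inl,
      rightPart_insert_inl, leftPart_insert_inr, rightPart_insert_inr] at hx hy ⊢
    · rw [M.r_local _ a c (by omega) (by omega)]
    · omega
    · omega
    · rw [N.r_local _ b d (by omega) (by omega)]

def diagonal (M : MatroidRank α) : MatroidRank (α ⊕ α) :=
  M.comap (Sum.elim id id)

def IsQuotient (N M : MatroidRank β) : Prop :=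
  ∀ S, M.cl S ⊆ N.cl S

lemma diagonal_isQuotient_sum (M : MatroidRank α) : M.diagonal.IsQuotient (M.sum M) := by
  intro S x hx
  rw [mem_cl] at hx ⊢
  change M.r ((insert x S).image _) = M.r (S.image _)
  rw [Finset.image_insert, ← leftPart_union_rightPart]
  rcases x with a | a
  · refine M.r_insert_eq_of_subset Finset.subset_union_left ?_
    simpa [sum] using hx
  · refine M.r_insert_eq_of_subset Finset.subset_union_right ?_
    simpa [sum] using hx

namespace IsQuotient

variable {N M : MatroidRank β}

lemma r_insert_add_le (hNM : N.IsQuotient M) (S : Finset β) (x : β) :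
    N.r (insert x S) + M.r S ≤ N.r S + M.r (insert x S) := by
  have := N.r_le_insert S x
  have := N.insert_le S x
  have := M.r_le_insert S x
  by_cases hx : M.r (insert x S) = M.r S
  · have := (N.mem_cl).1 (hNM S ((M.mem_cl).2 hx))
    omega
  · omega

lemma r_le (hNM : N.IsQuotient M) (S : Finset β) : N.r S ≤ M.r S := by
  induction S using Finset.induction_on with
  | empty => simp [N.r_empty]
  | insert x S _ ih =>
    have := hNM.r_insert_add_le S x
    omega

lemma min_r_local (hNM : N.IsQuotient M) (i : ℕ) (S : Finset β) (x y : β)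
    (hx : min (N.r (insert x S) + i) (M.r (insert x S)) = min (N.r S + i) (M.r S))
    (hy : min (N.r (insert y S) + i) (M.r (insert y S)) = min (N.r S + i) (M.r S)) :
    min (N.r (insert x (insert y S)) + i) (M.r (insert x (insert y S)))
      = min (N.r S + i) (M.r S) := by
  have := N.r_le_insert S x
  have := N.r_le_insert S y
  have := N.r_le_insert (insert y S) x
  have := M.r_le_insert S x
  have := M.r_le_insert S y
  have := M.r_le_insert (insert y S) x
  by_cases hc : N.r S + i ≤ M.r S
  · have := N.insert_le S x
    have := N.insert_le S y
    have := hNM.r_insert_add_le S x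
    have := hNM.r_insert_add_le S y
    have := N.r_local S x y (by omega) (by omega)
    omega
  · have := M.insert_le S x
    have := M.insert_le S y
    have := M.r_local S x y (by omega) (by omega)
    omega

def intermediate (hNM : N.IsQuotient M) (i : ℕ) : MatroidRank β where
  r S := min (N.r S + i) (M.r S)
  r_empty := by simp [M.r_empty]
  r_le_insert S x := by
    have := N.r_le_insert S x
    have := M.r_le_insert S x
    omega
  insert_le S x := by
    have := N.insert_le S x
    have := M.insert_le S x
    omega
  r_local S x y := hNM.min_r_local i S x y

lemma isFlat_intermediate_succ (hNM : N.IsQuotient M) {i : ℕ} {F : Finset β}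
    (hF : (hNM.intermediate i).IsFlat F) : (hNM.intermediate (i + 1)).IsFlat F := by
  intro x hx
  have hlt : min (N.r F + i) (M.r F) < min (N.r (insert x F) + i) (M.r (insert x F)) :=
    hF x hx
  have := hNM.r_insert_add_le F x
  have := N.r_le_insert F x
  have := N.insert_le F x
  have := M.insert_le F x
  change min _ _ < min _ _
  omega

end IsQuotient

end MatroidRank

end

/-- The intermediate matroids between Δ_M and M ⊕ M: the functions
A ⊔ B ↦ min{rank_M(A ∪ B) + i, rank_M(A) + rank_M(B)} are matroid rank functions,
with M_0 = Δ_M, M_r = M ⊕ M, and every flat of M_i is a flat of M_{i+1}. -/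
theorem diagonal_intermediate_matroids (M : MatroidRank α) :
    (∀ i, i ≤ M.r Finset.univ →
      ∃ Mi : MatroidRank (α ⊕ α), ∀ S : Finset (α ⊕ α),
        Mi.r S = min (M.r (leftPart S ∪ rightPart S) + i)
          (M.r (leftPart S) + M.r (rightPart S))) ∧
    (∀ S : Finset (α ⊕ α),
      min (M.r (leftPart S ∪ rightPart S) + 0)
          (M.r (leftPart S) + M.r (rightPart S))
        = M.r (leftPart S ∪ rightPart S)) ∧
    (∀ S : Finset (α ⊕ α),
      min (M.r (leftPart S ∪ rightPart S) + M.r Finset.univ)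
          (M.r (leftPart S) + M.r (rightPart S))
        = M.r (leftPart S) + M.r (rightPart S)) ∧
    (∀ i, i + 1 ≤ M.r Finset.univ →
      ∀ S : Finset (α ⊕ α),
        (∀ x ∉ S,
          min (M.r (leftPart S ∪ rightPart S) + i) (M.r (leftPart S) + M.r (rightPart S))
            < min (M.r (leftPart (insert x S) ∪ rightPart (insert x S)) + i)
                (M.r (leftPart (insert x S)) + M.r (rightPart (insert x S)))) →
        (∀ x ∉ S,
          min (M.r (leftPart S ∪ rightPart S) + (i+1)) (M.r (leftPart S) + M.r (rightPart S))
            < min (M.r (leftPart (insert x S) ∪ rightPart (insert x S)) + (i+1))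
                (M.r (leftPart (insert x S)) + M.r (rightPart (insert x S))))) := by
  have hq := M.diagonal_isQuotient_sum
  simp only [leftPart_union_rightPart]
  refine ⟨fun i _ => ⟨hq.intermediate i, fun S => rfl⟩, fun S => min_eq_left ?_,
    fun S => min_eq_right ?_, fun i _ S hS => hq.isFlat_intermediate_succ hS⟩
  · exact hq.r_le S
  · rw [← leftPart_union_rightPart]
    exact add_le_add (M.r_mono Finset.subset_union_left) (M.r_mono (Finset.subset_univ _))
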